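/- Let n ≥ 3, r = 2n/(n−2), and C₀ > 0. Let v : ℝⁿ → ℂ be locally L^r-integrable and suppose that for every cube Q ⊆ ℝⁿ and almost every x ∈ Q: |v(x)| ≤ C₀ ( (1/|Q|) ∫_{3Q} |v(y)| dy + ∫_{3Q} |x−y|^{1−n} |v(y)| dy ). Then there exist constants C₁ > 0 and κ ≥ 1, depending only on n and C₀, such that for every cube Q with side length ℓ(Q) = 1: esssup_{x ∈ Q} |v(x)| ≤ C₁ ( ∫_{κQ} |v|^r dx )^{1/r}. -/

import Mathlib

/-!
On a bounded cube the average of `g = |v|` is dominated by its Riesz potential, so the hypothesis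
reads `g ≤ C' ∫_{3Q} |x - y|^{1-n} g(y) dy` on `Q`. The kernel lies in `L^s_loc` for the exponent
`s = 2n/(2n-1)` conjugate to `2n`, so Young's inequality turns `g ∈ L^p(3Q)` into `g ∈ L^q(Q)` with
`1/q = 1/p - 1/(2n)`. Starting from `r = 2n/(n-2)` on `3^{n-2}Q`, `n - 3` such steps reach
`L^{2n}(3Q)`, and Hölder's inequality with the pair `(s, 2n)` then bounds `g` pointwise on `Q`;
hence `κ = 3^{n-2}`.
-/

open MeasureTheory ENNReal

noncomputable section

abbrev Euc (n : ℕ) := EuclideanSpace ℝ (Fin n)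

/-- The closed axis-parallel cube with center `z` and side length `ℓ`. -/
def cube {n : ℕ} (z : Euc n) (ℓ : ℝ) : Set (Euc n) :=
  {y | ∀ i, |y i - z i| ≤ ℓ / 2}

section KernelInequalities

variable {α β : Type*} [MeasurableSpace α] [MeasurableSpace β]

theorem lintegral_rpow_mul_rpow_mul_rpow_le {μ : Measure α} {f g h : α → ℝ≥0∞}
    (hf : AEMeasurable f μ) (hg : AEMeasurable g μ) (hh : AEMeasurable h μ) {a b c : ℝ}
    (ha : 0 ≤ a) (hb : 0 ≤ b) (hc : 0 ≤ c) (habc : a + b + c = 1) :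
    ∫⁻ x, f x ^ a * g x ^ b * h x ^ c ∂μ ≤
      (∫⁻ x, f x ∂μ) ^ a * (∫⁻ x, g x ∂μ) ^ b * (∫⁻ x, h x ∂μ) ^ c := by
  have := ENNReal.lintegral_prod_norm_pow_le (μ := μ) Finset.univ (f := ![f, g, h])
    (p := ![a, b, c]) (fun i _ => by fin_cases i <;> assumption)
    (by simpa [Fin.sum_univ_three] using habc) (fun i _ => by fin_cases i <;> assumption)
  simpa [Fin.prod_univ_three, mul_assoc] using this

theorem eLpNorm'_eq_lintegral_rpow {μ : Measure α} (f : α → ℝ≥0∞) (p : ℝ) :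
    eLpNorm' f p μ = (∫⁻ x, f x ^ p ∂μ) ^ (1 / p) := by
  simp [eLpNorm'_eq_lintegral_enorm]

variable {μ : Measure α} {ν : Measure β} [SFinite μ] [SFinite ν]
  {K : α → β → ℝ≥0∞} {g : β → ℝ≥0∞} {p q s : ℝ} {M : ℝ≥0∞}

-- Young's inequality for integral operators.
theorem eLpNorm'_lintegral_mul_le (hK : Measurable (Function.uncurry K))
    (hg : AEMeasurable g ν) (hp : 1 ≤ p) (hs : 1 ≤ s) (hq : 0 < q)
    (hpqs : 1 / p + 1 / s = 1 + 1 / q)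
    (hMx : ∀ᵐ x ∂μ, ∫⁻ y, K x y ^ s ∂ν ≤ M) (hMy : ∀ᵐ y ∂ν, ∫⁻ x, K x y ^ s ∂μ ≤ M) :
    eLpNorm' (fun x => ∫⁻ y, K x y * g y ∂ν) q μ ≤ M ^ (1 / s) * eLpNorm' g p ν := by
  set I := ∫⁻ y, g y ^ p ∂ν
  set θs := 1 / s - 1 / q
  set θp := 1 / p - 1 / q
  have hθs : 0 ≤ θs := by
    have : 1 / p ≤ 1 := div_le_one_of_le₀ hp (by linarith)
    simp only [θs]; linarith
  have hθp : 0 ≤ θp := by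
    have : 1 / s ≤ 1 := div_le_one_of_le₀ hs (by linarith)
    simp only [θp]; linarith
  have hp0 : 0 < p := by linarith
  have hs0 : 0 < s := by linarith
  -- Hölder with exponents `q`, `1/θs`, `1/θp` after splitting
  -- `K g = (K^s g^p)^(1/q) (K^s)^θs (g^p)^θp`.
  have hsplit_base : ∀ (a : ℝ≥0∞) {t θ : ℝ}, 0 < t → 0 ≤ θ → t * (1 / q + θ) = 1 →
      (a ^ t) ^ (1 / q) * (a ^ t) ^ θ = a := by
    intro a t θ ht hθ h
    rw [← ENNReal.rpow_add_of_nonneg _ _ (by positivity) hθ, ← ENNReal.rpow_mul, h,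
      ENNReal.rpow_one]
  have hsplit : ∀ x y, K x y * g y =
      (K x y ^ s * g y ^ p) ^ (1 / q) * (K x y ^ s) ^ θs * (g y ^ p) ^ θp := by
    intro x y
    rw [ENNReal.mul_rpow_of_nonneg _ _ (by positivity)]
    calc K x y * g y
        = ((K x y ^ s) ^ (1 / q) * (K x y ^ s) ^ θs) * ((g y ^ p) ^ (1 / q) * (g y ^ p) ^ θp) := by
          rw [hsplit_base _ hs0 hθs (by simp only [θs]; field_simp; ring),
            hsplit_base _ hp0 hθp (by simp only [θp]; field_simp; ring)]
      _ = _ := by ring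
  have hKx : ∀ x, Measurable (K x) := fun _ => hK.of_uncurry_left
  have hpointwise : ∀ᵐ x ∂μ, (∫⁻ y, K x y * g y ∂ν) ^ q ≤
      (∫⁻ y, K x y ^ s * g y ^ p ∂ν) * (M ^ θs * I ^ θp) ^ q := by
    filter_upwards [hMx] with x hx
    have hHolder : ∫⁻ y, K x y * g y ∂ν ≤
        (∫⁻ y, K x y ^ s * g y ^ p ∂ν) ^ (1 / q) * (M ^ θs * I ^ θp) := by
      simp_rw [hsplit x]
      refine (lintegral_rpow_mul_rpow_mul_rpow_le (f := fun y => K x y ^ s * g y ^ p)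
        (((hKx x).pow_const s).aemeasurable.mul (hg.pow_const p)) ((hKx x).pow_const s).aemeasurable
        (hg.pow_const p) (by positivity) hθs hθp (by simp only [θs, θp]; linarith)).trans ?_
      rw [mul_assoc]
      gcongr
    calc (∫⁻ y, K x y * g y ∂ν) ^ q
        ≤ ((∫⁻ y, K x y ^ s * g y ^ p ∂ν) ^ (1 / q) * (M ^ θs * I ^ θp)) ^ q := by gcongr
      _ = _ := by
        rw [ENNReal.mul_rpow_of_nonneg _ _ hq.le, ← ENNReal.rpow_mul, one_div_mul_cancel hq.ne',
          ENNReal.rpow_one]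
  have hF : AEMeasurable (Function.uncurry fun x y => K x y ^ s * g y ^ p) (μ.prod ν) :=
    (hK.pow_const s).aemeasurable.mul (hg.comp_snd.pow_const p)
  have hintegral : ∫⁻ x, (∫⁻ y, K x y * g y ∂ν) ^ q ∂μ ≤ M * I * (M ^ θs * I ^ θp) ^ q := by
    calc ∫⁻ x, (∫⁻ y, K x y * g y ∂ν) ^ q ∂μ
        ≤ ∫⁻ x, (∫⁻ y, K x y ^ s * g y ^ p ∂ν) * (M ^ θs * I ^ θp) ^ q ∂μ :=
          lintegral_mono_ae hpointwise
      _ = (∫⁻ y, (∫⁻ x, K x y ^ s ∂μ) * g y ^ p ∂ν) * (M ^ θs * I ^ θp) ^ q := by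
          rw [lintegral_mul_const'' _ hF.lintegral_prod_right, lintegral_lintegral_swap hF]
          congr 1
          refine lintegral_congr fun y => ?_
          exact lintegral_mul_const _ (hK.of_uncurry_right.pow_const s)
      _ ≤ (∫⁻ y, M * g y ^ p ∂ν) * (M ^ θs * I ^ θp) ^ q := by
          gcongr ?_ * _
          exact lintegral_mono_ae (hMy.mono fun y hy => by gcongr)
      _ = M * I * (M ^ θs * I ^ θp) ^ q := by rw [lintegral_const_mul'' _ (hg.pow_const p)]
  rw [eLpNorm'_eq_lintegral_rpow, eLpNorm'_eq_lintegral_rpow]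
  calc (∫⁻ x, (∫⁻ y, K x y * g y ∂ν) ^ q ∂μ) ^ (1 / q)
      ≤ (M * I * (M ^ θs * I ^ θp) ^ q) ^ (1 / q) := by gcongr
    _ = M ^ (1 / q + θs) * I ^ (1 / q + θp) := by
        rw [ENNReal.mul_rpow_of_nonneg _ _ (by positivity), ← ENNReal.rpow_mul,
          mul_one_div_cancel hq.ne', ENNReal.rpow_one,
          ENNReal.mul_rpow_of_nonneg _ _ (by positivity),
          ENNReal.rpow_add_of_nonneg _ _ (by positivity) hθs,
          ENNReal.rpow_add_of_nonneg _ _ (by positivity) hθp]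
        ring
    _ = M ^ (1 / s) * I ^ (1 / p) := by simp only [θs, θp]; ring_nf

theorem le_pow_mul_of_le_mul_succ {N : ℕ → ℝ≥0∞} {c : ℝ≥0∞} {a b : ℕ} (hab : a ≤ b)
    (h : ∀ m, a ≤ m → m < b → N m ≤ c * N (m + 1)) : N a ≤ c ^ (b - a) * N b := by
  induction b, hab using Nat.le_induction with
  | base => simp
  | succ b hab ih =>
    calc N a ≤ c ^ (b - a) * N b := ih fun m ham hmb => h m ham (by omega)
      _ ≤ c ^ (b - a) * (c * N (b + 1)) := by gcongr; exact h b hab (by omega)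
      _ = c ^ (b + 1 - a) * N (b + 1) := by rw [← mul_assoc, ← pow_succ, Nat.sub_add_comm hab]

end KernelInequalities

open Metric

section RieszPotential

variable {n : ℕ}

theorem dist_le_sqrt_mul_of_abs_sub_le {x y : Euc n} {c : ℝ} (hc : 0 ≤ c)
    (h : ∀ i, |x i - y i| ≤ c) : dist x y ≤ √n * c := by
  rw [EuclideanSpace.dist_eq, ← Real.sqrt_sq hc, ← Real.sqrt_mul (Nat.cast_nonneg n)]
  gcongr
  calc ∑ i, dist (x i) (y i) ^ 2 ≤ ∑ _i : Fin n, c ^ 2 := by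
        gcongr with i; rw [Real.dist_eq]; exact h i
    _ = n * c ^ 2 := by simp

theorem dist_le_of_mem_cube {z x y : Euc n} {ℓ : ℝ} (hℓ : 0 ≤ ℓ) (hx : x ∈ cube z ℓ)
    (hy : y ∈ cube z ℓ) : dist x y ≤ √n * ℓ := by
  refine dist_le_sqrt_mul_of_abs_sub_le hℓ fun i => ?_
  calc |x i - y i| ≤ |x i - z i| + |z i - y i| := abs_sub_le _ _ _
    _ ≤ ℓ := by linarith [hx i, abs_sub_comm (z i) (y i) ▸ hy i]

theorem cube_subset_closedBall {z x : Euc n} {ℓ : ℝ} (hℓ : 0 ≤ ℓ) (hx : x ∈ cube z ℓ) :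
    cube z ℓ ⊆ closedBall x (√n * ℓ) :=
  fun _ hy => dist_le_of_mem_cube hℓ hy hx

theorem cube_mono {z : Euc n} {a b : ℝ} (h : a ≤ b) : cube z a ⊆ cube z b :=
  fun _ hy i => (hy i).trans (by linarith)

theorem isClosed_cube (z : Euc n) (ℓ : ℝ) : IsClosed (cube z ℓ) := by
  simp only [cube, Set.ofPred_forall]
  exact isClosed_iInter fun i => isClosed_le (by fun_prop) continuous_const

theorem measurableSet_cube (z : Euc n) (ℓ : ℝ) : MeasurableSet (cube z ℓ) :=
  (isClosed_cube z ℓ).measurableSet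

-- `Real.rpow` makes this vanish on the diagonal `x = y`.
def rieszKernel (n : ℕ) (x y : Euc n) : ℝ≥0∞ := ENNReal.ofReal (dist x y ^ ((1 : ℝ) - n))

theorem measurable_rieszKernel : Measurable (Function.uncurry (rieszKernel n)) :=
  ENNReal.measurable_ofReal.comp (measurable_dist.pow_const _)

theorem rieszKernel_comm (x y : Euc n) : rieszKernel n x y = rieszKernel n y x := by
  rw [rieszKernel, rieszKernel, dist_comm]

theorem lintegral_closedBall_rieszKernel_rpow (x : Euc n) (R t : ℝ) :
    ∫⁻ y in closedBall x R, rieszKernel n x y ^ t =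
      ∫⁻ w in closedBall 0 R, rieszKernel n 0 w ^ t := by
  rw [← (measurePreserving_add_left volume x).setLIntegral_comp_preimage_emb
    (measurableEmbedding_addLeft x)]
  simp [rieszKernel]

theorem lintegral_closedBall_rieszKernel_rpow_lt_top (hn : 1 ≤ n) {t : ℝ} (ht : 0 ≤ t)
    (htn : (n - 1) * t < n) (R : ℝ) :
    ∫⁻ w in closedBall 0 R, rieszKernel n 0 w ^ t < ∞ := by
  have hdim : Module.finrank ℝ (Euc n) = n := finrank_euclideanSpace_fin
  have hloc : LocallyIntegrable (fun w : Euc n => ‖w‖ ^ (-((n - 1) * t))) volume :=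
    locallyIntegrable_of_norm_le_rpow (C := 1) (by omega) (by rwa [hdim])
      (ae_of_all _ fun w => by simp [abs_of_nonneg (Real.rpow_nonneg (norm_nonneg w) _)])
      (measurable_norm.pow_const _).aestronglyMeasurable
  have heq : ∀ w : Euc n, rieszKernel n 0 w ^ t = ENNReal.ofReal (‖w‖ ^ (-((n - 1) * t))) := by
    intro w
    rw [rieszKernel, ENNReal.ofReal_rpow_of_nonneg (Real.rpow_nonneg dist_nonneg _) ht,
      ← Real.rpow_mul dist_nonneg, dist_zero_left]
    ring_nf
  simp_rw [heq]
  exact (hloc.integrableOn_isCompact (isCompact_closedBall 0 R)).setLIntegral_lt_top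

theorem one_le_ofReal_mul_rieszKernel {x y : Euc n} {D : ℝ} (hn : 1 ≤ n) (hxy : x ≠ y)
    (hD : dist x y ≤ D) : 1 ≤ ENNReal.ofReal (D ^ ((n : ℝ) - 1)) * rieszKernel n x y := by
  have hd : 0 < dist x y := dist_pos.mpr hxy
  have hn1 : (0 : ℝ) ≤ n - 1 := by rw [sub_nonneg]; exact_mod_cast hn
  rw [rieszKernel, ← ENNReal.ofReal_mul (Real.rpow_nonneg (hd.le.trans hD) _),
    ENNReal.one_le_ofReal, show (1 : ℝ) - n = -(n - 1) by ring, Real.rpow_neg hd.le,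
    ← div_eq_mul_inv, one_le_div (by positivity)]
  exact Real.rpow_le_rpow hd.le hD hn1

theorem lintegral_le_mul_lintegral_rieszKernel (hn : 1 ≤ n) {x : Euc n} {S : Set (Euc n)}
    {D : ℝ} (hS : S ⊆ closedBall x D) (g : Euc n → ℝ≥0∞) :
    ∫⁻ y in S, g y ≤ ENNReal.ofReal (D ^ ((n : ℝ) - 1)) * ∫⁻ y in S, rieszKernel n x y * g y := by
  have : Nontrivial (Euc n) :=
    Module.nontrivial_of_finrank_pos (R := ℝ) (by rw [finrank_euclideanSpace_fin]; omega)
  rw [← lintegral_const_mul' _ _ ENNReal.ofReal_ne_top]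
  refine lintegral_mono_ae ?_
  have hne : ∀ᵐ y ∂(volume : Measure (Euc n)), y ≠ x := by
    simp [ae_iff, measure_singleton]
  filter_upwards [ae_restrict_of_ae hne, ae_restrict_of_ae_restrict_of_subset hS
    (ae_restrict_mem measurableSet_closedBall)] with y hyx hyD
  rw [← mul_assoc]
  exact le_mul_of_one_le_left' (one_le_ofReal_mul_rieszKernel hn hyx.symm
    (by rwa [dist_comm, ← mem_closedBall]))

def IsDominatedByRieszPotential (C : ℝ≥0∞) (g : Euc n → ℝ≥0∞) : Prop :=
  ∀ (z : Euc n) (ℓ : ℝ), 0 < ℓ → ∀ᵐ x, x ∈ cube z ℓ →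
    g x ≤ C * ((ENNReal.ofReal (ℓ ^ n))⁻¹ * (∫⁻ y in cube z (3 * ℓ), g y) +
      ∫⁻ y in cube z (3 * ℓ), rieszKernel n x y * g y)

theorem lintegral_rieszKernel_rpow_le {z x : Euc n} {κ : ℝ} (hκ : 0 ≤ κ) (hx : x ∈ cube z κ)
    {S : Set (Euc n)} (hS : S ⊆ cube z κ) (t : ℝ) :
    ∫⁻ y in S, rieszKernel n x y ^ t ≤ ∫⁻ w in closedBall 0 (√n * κ), rieszKernel n 0 w ^ t :=
  (lintegral_mono_set (hS.trans (cube_subset_closedBall hκ hx))).trans_eq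
    (lintegral_closedBall_rieszKernel_rpow x _ t)

-- `C (1 + D^{n-1})` bounds `g` by its Riesz potential on cubes inside a cube of diameter
-- `D = √n κ`; the last factor is the `L^s` norm of the kernel on `closedBall 0 D`, finite since
-- `(n - 1) s < n`.
def rieszConst (n : ℕ) (C : ℝ≥0∞) (κ : ℝ) : ℝ≥0∞ :=
  let s := (2 * n : ℝ).conjExponent
  C * (1 + ENNReal.ofReal ((√n * κ) ^ ((n : ℝ) - 1))) *
    (∫⁻ w in closedBall 0 (√n * κ), rieszKernel n 0 w ^ s) ^ (1 / s)

theorem holderConjugate_two_mul (hn : 1 ≤ n) :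
    (2 * n : ℝ).HolderConjugate (2 * n : ℝ).conjExponent := by
  have : (1 : ℝ) ≤ n := by exact_mod_cast hn
  exact .conjExponent (by linarith)

theorem rieszConst_ne_top (hn : 1 ≤ n) {C : ℝ≥0∞} (hC : C ≠ ∞) (κ : ℝ) : rieszConst n C κ ≠ ∞ := by
  have hs := holderConjugate_two_mul hn
  have hn' : (1 : ℝ) ≤ n := by exact_mod_cast hn
  have hlt : (n - 1) * (2 * n : ℝ).conjExponent < n := by
    rw [Real.conjExponent, mul_div_assoc', div_lt_iff₀ (by linarith)]; nlinarith
  refine ENNReal.mul_ne_top (ENNReal.mul_ne_top hC (by simp)) ?_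
  exact ENNReal.rpow_ne_top_of_nonneg hs.symm.one_div_nonneg
    (lintegral_closedBall_rieszKernel_rpow_lt_top hn hs.symm.nonneg hlt _).ne

variable {C : ℝ≥0∞} {g : Euc n → ℝ≥0∞}

theorem IsDominatedByRieszPotential.ae_le_mul_lintegral_rieszKernel (hn : 1 ≤ n)
    (hdom : IsDominatedByRieszPotential C g) (z : Euc n) {ℓ κ : ℝ} (hℓ : 1 ≤ ℓ)
    (hℓκ : 3 * ℓ ≤ κ) :
    ∀ᵐ x, x ∈ cube z ℓ → g x ≤ C * (1 + ENNReal.ofReal ((√n * κ) ^ ((n : ℝ) - 1))) *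
      ∫⁻ y in cube z (3 * ℓ), rieszKernel n x y * g y := by
  filter_upwards [hdom z ℓ (by linarith)] with x hx hxℓ
  set P := ∫⁻ y in cube z (3 * ℓ), rieszKernel n x y * g y
  have hvol : (ENNReal.ofReal (ℓ ^ n))⁻¹ ≤ 1 :=
    ENNReal.inv_le_one.mpr (ENNReal.one_le_ofReal.mpr (one_le_pow₀ hℓ))
  have havg : ∫⁻ y in cube z (3 * ℓ), g y ≤ ENNReal.ofReal ((√n * κ) ^ ((n : ℝ) - 1)) * P :=
    lintegral_le_mul_lintegral_rieszKernel hn ((cube_mono hℓκ).trans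
      (cube_subset_closedBall (by linarith) (cube_mono (by linarith) hxℓ))) g
  calc g x ≤ C * ((ENNReal.ofReal (ℓ ^ n))⁻¹ * (∫⁻ y in cube z (3 * ℓ), g y) + P) := hx hxℓ
    _ ≤ C * (1 * (ENNReal.ofReal ((√n * κ) ^ ((n : ℝ) - 1)) * P) + P) := by gcongr
    _ = _ := by ring

theorem IsDominatedByRieszPotential.eLpNorm'_cube_le (hn : 1 ≤ n)
    (hdom : IsDominatedByRieszPotential C g) (hg : AEMeasurable g) (z : Euc n) {ℓ κ p q : ℝ}
    (hℓ : 1 ≤ ℓ) (hℓκ : 3 * ℓ ≤ κ) (hp : 1 ≤ p) (hq : 0 < q) (hpq : 1 / q = 1 / p - 1 / (2 * n)) :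
    eLpNorm' g q (volume.restrict (cube z ℓ)) ≤
      rieszConst n C κ * eLpNorm' g p (volume.restrict (cube z (3 * ℓ))) := by
  have hs := holderConjugate_two_mul hn
  set s := (2 * n : ℝ).conjExponent
  set M := ∫⁻ w in closedBall 0 (√n * κ), rieszKernel n 0 w ^ s
  have hκ : 0 ≤ κ := by linarith
  have hA : cube z ℓ ⊆ cube z κ := cube_mono (by linarith)
  have hB : cube z (3 * ℓ) ⊆ cube z κ := cube_mono hℓκ
  have hKg : AEMeasurable (fun x => ∫⁻ y in cube z (3 * ℓ), rieszKernel n x y * g y)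
      (volume.restrict (cube z ℓ)) :=
    (measurable_rieszKernel.aemeasurable.mul hg.restrict.comp_snd).lintegral_prod_right
  have hYoung := eLpNorm'_lintegral_mul_le (μ := volume.restrict (cube z ℓ)) (M := M)
    measurable_rieszKernel hg.restrict hp hs.symm.lt.le hq
    (by rw [hpq, one_div s, ← hs.one_sub_inv]; ring)
    (ae_restrict_of_forall_mem (measurableSet_cube z ℓ) fun x hx =>
      lintegral_rieszKernel_rpow_le hκ (hA hx) hB s)
    (ae_restrict_of_forall_mem (measurableSet_cube z _) fun y hy => by
      simp_rw [rieszKernel_comm _ y]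
      exact lintegral_rieszKernel_rpow_le hκ (hB hy) hA s)
  calc eLpNorm' g q (volume.restrict (cube z ℓ))
      ≤ C * (1 + ENNReal.ofReal ((√n * κ) ^ ((n : ℝ) - 1))) *
          eLpNorm' (fun x => ∫⁻ y in cube z (3 * ℓ), rieszKernel n x y * g y) q
            (volume.restrict (cube z ℓ)) :=
        eLpNorm'_le_mul_eLpNorm'_of_ae_le_mul hKg.aestronglyMeasurable
          ((ae_restrict_iff' (measurableSet_cube z ℓ)).mpr
            (hdom.ae_le_mul_lintegral_rieszKernel hn z hℓ hℓκ)) hq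
    _ ≤ _ := by
        rw [rieszConst, mul_assoc _ (M ^ (1 / s))]
        gcongr

theorem IsDominatedByRieszPotential.essSup_cube_le (hn : 1 ≤ n)
    (hdom : IsDominatedByRieszPotential C g) (hg : AEMeasurable g) (z : Euc n) {κ : ℝ}
    (hκ : 3 ≤ κ) :
    essSup g (volume.restrict (cube z 1)) ≤
      rieszConst n C κ * eLpNorm' g (2 * n) (volume.restrict (cube z 3)) := by
  have hs := holderConjugate_two_mul hn
  set s := (2 * n : ℝ).conjExponent
  refine essSup_le_of_ae_le _ ((ae_restrict_iff' (measurableSet_cube z 1)).mpr ?_)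
  filter_upwards [hdom.ae_le_mul_lintegral_rieszKernel hn z le_rfl (by linarith)] with x hx hx1
  have hHolder := ENNReal.lintegral_mul_le_Lp_mul_Lq (volume.restrict (cube z (3 * 1))) hs.symm
    (measurable_rieszKernel.of_uncurry_left (x := x)).aemeasurable hg.restrict
  have hK : ∫⁻ y in cube z (3 * 1), rieszKernel n x y ^ s ≤
      ∫⁻ w in closedBall 0 (√n * κ), rieszKernel n 0 w ^ s :=
    lintegral_rieszKernel_rpow_le (by linarith) (cube_mono (by linarith) hx1)
      (cube_mono (by linarith)) s
  rw [mul_one] at hx hHolder hK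
  calc g x ≤ C * (1 + ENNReal.ofReal ((√n * κ) ^ ((n : ℝ) - 1))) *
        ∫⁻ y in cube z 3, rieszKernel n x y * g y := hx hx1
    _ ≤ _ := by
        rw [rieszConst, eLpNorm'_eq_lintegral_rpow, mul_assoc _ (_ ^ (1 / s))]
        gcongr
        exact hHolder.trans (by gcongr; exact hs.symm.one_div_nonneg)

theorem IsDominatedByRieszPotential.essSup_cube_le_eLpNorm' (hn : 3 ≤ n)
    (hdom : IsDominatedByRieszPotential C g) (hg : AEMeasurable g) (z : Euc n) :
    essSup g (volume.restrict (cube z 1)) ≤ rieszConst n C (3 ^ (n - 2)) ^ (n - 2) *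
      eLpNorm' g (2 * n / ((n : ℝ) - 2)) (volume.restrict (cube z (3 ^ (n - 2)))) := by
  set c := rieszConst n C (3 ^ (n - 2))
  set N : ℕ → ℝ≥0∞ := fun m => eLpNorm' g (2 * n / m) (volume.restrict (cube z (3 ^ m)))
  have hstep : ∀ m, 1 ≤ m → m < n - 2 → N m ≤ c * N (m + 1) := by
    intro m hm hmn
    have hm' : (1 : ℝ) ≤ m := by exact_mod_cast hm
    have hmn' : (m : ℝ) + 1 ≤ 2 * n := by norm_cast; omega
    simp only [N, pow_succ' (3 : ℝ) m]
    refine hdom.eLpNorm'_cube_le (by omega) hg z (one_le_pow₀ (by norm_num))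
      (by rw [← pow_succ']; exact pow_le_pow_right₀ (by norm_num) (by omega))
      (by rw [le_div_iff₀ (by positivity)]; push_cast; linarith) (by positivity) ?_
    push_cast
    field_simp
    ring
  have hfinal := hdom.essSup_cube_le (by omega) hg z (κ := 3 ^ (n - 2))
    (le_self_pow₀ (by norm_num) (by omega))
  calc essSup g (volume.restrict (cube z 1))
      ≤ c * N 1 := by simpa [N] using hfinal
    _ ≤ c * (c ^ (n - 2 - 1) * N (n - 2)) := by
        gcongr; exact le_pow_mul_of_le_mul_succ (by omega) hstep
    _ = _ := by
        rw [← mul_assoc, ← pow_succ', Nat.sub_add_cancel (by omega)]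
        simp only [N, Nat.cast_sub (by omega : 2 ≤ n), Nat.cast_ofNat]

end RieszPotential

theorem statement11_general (n : ℕ) (hn : 3 ≤ n) (C₀ : ℝ) :
    ∃ C₁ > 0, ∃ κ : ℝ, 1 ≤ κ ∧
      ∀ v : Euc n → ℂ, AEStronglyMeasurable v volume →
        (∀ K : Set (Euc n), IsCompact K →
          (∫⁻ x in K, ((‖v x‖₊ : ℝ≥0∞)) ^ ((2 * (n : ℝ)) / ((n : ℝ) - 2))) < ⊤) →
        (∀ (z : Euc n) (ℓ : ℝ), 0 < ℓ →
          ∀ᵐ x ∂(volume : Measure (Euc n)), x ∈ cube z ℓ →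
            (‖v x‖₊ : ℝ≥0∞) ≤ ENNReal.ofReal C₀ *
              ((ENNReal.ofReal (ℓ ^ n))⁻¹ * (∫⁻ y in cube z (3 * ℓ), (‖v y‖₊ : ℝ≥0∞)) +
                ∫⁻ y in cube z (3 * ℓ),
                  ENNReal.ofReal (dist x y ^ ((1 : ℝ) - (n : ℝ))) * (‖v y‖₊ : ℝ≥0∞))) →
      ∀ z : Euc n,
        essSup (fun x => (‖v x‖₊ : ℝ≥0∞)) (volume.restrict (cube z 1)) ≤
          ENNReal.ofReal C₁ *
            (∫⁻ x in cube z κ,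
              ((‖v x‖₊ : ℝ≥0∞)) ^ ((2 * (n : ℝ)) / ((n : ℝ) - 2))) ^
              (((n : ℝ) - 2) / (2 * (n : ℝ))) := by
  set c := rieszConst n (ENNReal.ofReal C₀) (3 ^ (n - 2)) ^ (n - 2)
  have hc : c ≠ ∞ := ENNReal.pow_ne_top (rieszConst_ne_top (by omega) ENNReal.ofReal_ne_top _)
  refine ⟨c.toReal + 1, by positivity, 3 ^ (n - 2), one_le_pow₀ (by norm_num),
    fun v hv _ hdom z => ?_⟩
  have hc_le : c ≤ ENNReal.ofReal (c.toReal + 1) := by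
    rw [ENNReal.ofReal_add ENNReal.toReal_nonneg zero_le_one, ENNReal.ofReal_toReal hc]
    exact le_self_add
  calc essSup (fun x => (‖v x‖₊ : ℝ≥0∞)) (volume.restrict (cube z 1))
      ≤ c * eLpNorm' (fun x => (‖v x‖₊ : ℝ≥0∞)) (2 * n / ((n : ℝ) - 2))
          (volume.restrict (cube z (3 ^ (n - 2)))) :=
        IsDominatedByRieszPotential.essSup_cube_le_eLpNorm' hn hdom hv.enorm z
    _ ≤ _ := by
        rw [eLpNorm'_eq_lintegral_rpow, one_div_div]
        gcongr

/-- Self-improvement: a locally `L^r` function (`r = 2n/(n−2)`) satisfying, on every cube,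
the pointwise bound by the average of `|v|` on `3Q` plus the Riesz potential of order one
of `|v|` over `3Q`, is essentially bounded on unit cubes by a dilated `L^r` average. -/
theorem statement11 (n : ℕ) (hn : 3 ≤ n) (C₀ : ℝ) (hC₀ : 0 < C₀) :
    ∃ C₁ > 0, ∃ κ : ℝ, 1 ≤ κ ∧
      ∀ v : Euc n → ℂ, AEStronglyMeasurable v volume →
        (∀ K : Set (Euc n), IsCompact K →
          (∫⁻ x in K, ((‖v x‖₊ : ℝ≥0∞)) ^ ((2 * (n : ℝ)) / ((n : ℝ) - 2))) < ⊤) →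
        (∀ (z : Euc n) (ℓ : ℝ), 0 < ℓ →
          ∀ᵐ x ∂(volume : Measure (Euc n)), x ∈ cube z ℓ →
            (‖v x‖₊ : ℝ≥0∞) ≤ ENNReal.ofReal C₀ *
              ((ENNReal.ofReal (ℓ ^ n))⁻¹ * (∫⁻ y in cube z (3 * ℓ), (‖v y‖₊ : ℝ≥0∞)) +
                ∫⁻ y in cube z (3 * ℓ),
                  ENNReal.ofReal (dist x y ^ ((1 : ℝ) - (n : ℝ))) * (‖v y‖₊ : ℝ≥0∞))) →
      ∀ z : Euc n,
        essSup (fun x => (‖v x‖₊ : ℝ≥0∞)) (volume.restrict (cube z 1)) ≤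
          ENNReal.ofReal C₁ *
            (∫⁻ x in cube z κ,
              ((‖v x‖₊ : ℝ≥0∞)) ^ ((2 * (n : ℝ)) / ((n : ℝ) - 2))) ^
              (((n : ℝ) - 2) / (2 * (n : ℝ))) :=
  statement11_general n hn C₀
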